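/- Let K ⊂ ℝⁿ be a compact C¹ submanifold and suppose there exist p₁, p₂ ∈ K, normal vectors v₁ ⊥ T_{p₁}K and v₂ ⊥ T_{p₂}K with v₁ ≠ v₂ (as points of the normal bundle, i.e. (p₁,v₁) ≠ (p₂,v₂)), p₁ + v₁ = p₂ + v₂ = q, and ‖v₁‖ ≤ ‖v₂‖ < R. Then there exists a point p ∈ K, a unit normal u ⊥ T_pK, and a point x ∈ K with ‖(p + R·u) − x‖ < R, i.e. the open ball of radius R tangent to K at p in direction u contains a point of K. -/
import Mathlib


open scoped RealInnerProductSpace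

/-- `K` is a `k`-dimensional embedded `C¹` submanifold (without boundary) of `ℝⁿ`:
near each of its points, `K` is the image of an injective `C¹` immersion of an open
subset of `ℝᵏ`. -/
def IsC1Submanifold {n : ℕ} (k : ℕ) (K : Set (EuclideanSpace ℝ (Fin n))) : Prop :=
  ∀ p ∈ K, ∃ (U : Set (EuclideanSpace ℝ (Fin k))) (V : Set (EuclideanSpace ℝ (Fin n)))
    (φ : EuclideanSpace ℝ (Fin k) → EuclideanSpace ℝ (Fin n)),
      IsOpen U ∧ IsOpen V ∧ p ∈ V ∧ ContDiffOn ℝ 1 φ U ∧ Set.InjOn φ U ∧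
      φ '' U = K ∩ V ∧ ∀ x ∈ U, Function.Injective (fderiv ℝ φ x)

/-- `K` is a `k`-dimensional embedded `C^{1,1}` submanifold of `ℝⁿ`: a `C¹`
submanifold whose local parametrizations have locally Lipschitz derivative. -/
def IsC11Submanifold {n : ℕ} (k : ℕ) (K : Set (EuclideanSpace ℝ (Fin n))) : Prop :=
  ∀ p ∈ K, ∃ (U : Set (EuclideanSpace ℝ (Fin k))) (V : Set (EuclideanSpace ℝ (Fin n)))
    (φ : EuclideanSpace ℝ (Fin k) → EuclideanSpace ℝ (Fin n)) (L : NNReal),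
      IsOpen U ∧ IsOpen V ∧ p ∈ V ∧ ContDiffOn ℝ 1 φ U ∧ Set.InjOn φ U ∧
      φ '' U = K ∩ V ∧ (∀ x ∈ U, Function.Injective (fderiv ℝ φ x)) ∧
      LipschitzOnWith L (fderiv ℝ φ) U

/-- `w` is a normal vector to `K` at `p`: it is orthogonal to the tangent cone of
`K` at `p`. -/
def IsNormalAt {n : ℕ} (K : Set (EuclideanSpace ℝ (Fin n))) (p w : EuclideanSpace ℝ (Fin n)) :
    Prop :=
  ∀ u ∈ tangentConeAt ℝ K p, ⟪u, w⟫ = 0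

/-- The normal injectivity radius `i(K, ℝⁿ)` of `K ⊂ ℝⁿ`: the supremum of `0` and
all `r > 0` such that the normal exponential map `(p, v) ↦ p + v` is injective on
normal vectors of length `< r`. -/
noncomputable def normalInjRad {n : ℕ} (K : Set (EuclideanSpace ℝ (Fin n))) : ℝ :=
  sSup ({0} ∪ {r : ℝ | 0 < r ∧
    Set.InjOn (fun pv : EuclideanSpace ℝ (Fin n) × EuclideanSpace ℝ (Fin n) => pv.1 + pv.2)
      {pv | pv.1 ∈ K ∧ IsNormalAt K pv.1 pv.2 ∧ ‖pv.2‖ < r}})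

/-- The rolling-ball radius `R_O(K, ℝⁿ)`: the infimum of radii `r > 0` such that some
open ball of radius `r` tangent to `K` from a normal direction meets `K`. -/
noncomputable def ballRad {n : ℕ} (K : Set (EuclideanSpace ℝ (Fin n))) : ℝ :=
  sInf {r : ℝ | 0 < r ∧ ∃ p ∈ K, ∃ w : EuclideanSpace ℝ (Fin n),
    IsNormalAt K p w ∧ ‖w‖ = 1 ∧ ∃ q ∈ K, dist (p + r • w) q < r}

/-- **Failure of normal injectivity within radius `R` yields a tangent ball of radius
`R` meeting `K` (one direction of Proposition 1).** If two distinct normal vectors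
`v₁, v₂` of lengths `≤ ‖v₂‖ < R` based at `p₁, p₂ ∈ K` have the same endpoint
`p₁ + v₁ = p₂ + v₂`, then some open ball of radius `R` tangent to `K` from a unit
normal direction contains a point of `K`. -/
theorem tangent_ball_meets_of_normal_exp_not_injective {n k : ℕ}
    (K : Set (EuclideanSpace ℝ (Fin n)))
    (hK : IsC1Submanifold k K) (hcomp : IsCompact K)
    (p₁ p₂ v₁ v₂ : EuclideanSpace ℝ (Fin n)) (R : ℝ)
    (hp₁ : p₁ ∈ K) (hp₂ : p₂ ∈ K)
    (hn₁ : IsNormalAt K p₁ v₁) (hn₂ : IsNormalAt K p₂ v₂)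
    (hne : (p₁, v₁) ≠ (p₂, v₂))
    (heq : p₁ + v₁ = p₂ + v₂)
    (hle : ‖v₁‖ ≤ ‖v₂‖) (hlt : ‖v₂‖ < R) :
    ∃ p ∈ K, ∃ u : EuclideanSpace ℝ (Fin n), IsNormalAt K p u ∧ ‖u‖ = 1 ∧
      ∃ x ∈ K, ‖p + R • u - x‖ < R := by
  classical
  have hv₂ : v₂ ≠ 0 := by
    rintro rfl
    have hv₁ : v₁ = 0 := norm_le_zero_iff.mp (by simpa using hle)
    subst hv₁
    exact hne (Prod.ext (by simpa using heq) rfl)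
  have ht : 0 < ‖v₂‖ := norm_pos_iff.mpr hv₂
  set t : ℝ := ‖v₂‖ with ht_def
  have hv₁₂ : v₁ ≠ v₂ := by
    rintro rfl
    exact hne (Prod.ext (by simpa using heq) rfl)
  set u : EuclideanSpace ℝ (Fin n) := t⁻¹ • v₂ with hu_def
  have hu : ‖u‖ = 1 := by
    rw [hu_def, norm_smul, Real.norm_eq_abs, abs_of_pos (inv_pos.mpr ht),
      inv_mul_cancel₀ ht.ne']
  refine ⟨p₂, hp₂, u, ?_, hu, p₁, hp₁, ?_⟩
  · intro x hx
    rw [hu_def, real_inner_smul_right, hn₂ x hx, mul_zero]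
  · have hp : p₂ - p₁ = v₁ - v₂ := by
      have : p₂ = p₁ + v₁ - v₂ := by rw [heq]; abel
      rw [this]; abel
    have hd : p₂ + R • u - p₁ = (v₁ - v₂) + R • u := by
      rw [add_sub_right_comm, hp]
    rw [hd]
    set w : EuclideanSpace ℝ (Fin n) := v₁ - v₂ with hw_def
    set a : ℝ := ⟪v₁, v₂⟫ with ha_def
    have hwv : ⟪w, v₂⟫ = a - t ^ 2 := by
      rw [hw_def, inner_sub_left, ha_def, real_inner_self_eq_norm_sq]
    have hwu : ⟪w, u⟫ = t⁻¹ * (a - t ^ 2) := by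
      rw [hu_def, real_inner_smul_right, hwv]
    have hsq : ‖w + R • u‖ ^ 2 = ‖w‖ ^ 2 + 2 * (R * (t⁻¹ * (a - t ^ 2))) + R ^ 2 := by
      rw [norm_add_sq_real, real_inner_smul_right, hwu, norm_smul, Real.norm_eq_abs, hu,
        mul_one, sq_abs]
    have hw2 : ‖w‖ ^ 2 = ‖v₁‖ ^ 2 - 2 * a + t ^ 2 := by
      rw [hw_def, norm_sub_sq_real, ha_def, ht_def]
    have hwpos : 0 < ‖w‖ ^ 2 := by
      have hw0 : w ≠ 0 := sub_ne_zero.mpr hv₁₂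
      exact pow_pos (norm_pos_iff.mpr hw0) 2
    have ha_le : a ≤ ‖v₁‖ * t := real_inner_le_norm v₁ v₂
    have hv₁sq : ‖v₁‖ ^ 2 ≤ t ^ 2 := by nlinarith [norm_nonneg v₁]
    have hA : a < t ^ 2 := by nlinarith
    have hs : 0 < t⁻¹ * (t ^ 2 - a) := mul_pos (inv_pos.mpr ht) (by linarith)
    have h1 : t * (t⁻¹ * (t ^ 2 - a)) = t ^ 2 - a := by
      rw [← mul_assoc, mul_inv_cancel₀ ht.ne', one_mul]
    have hkey : ‖w + R • u‖ ^ 2 < R ^ 2 := by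
      rw [hsq]
      nlinarith [mul_pos (sub_pos.mpr hlt) hs]
    exact lt_of_pow_lt_pow_left₀ 2 (le_of_lt (ht.trans hlt)) hkey
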